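/- There exists a constant C > 0 such that for every integer n ≥ 3 and every sequence 𝒢 = (G_1, G_2, …) of communication graphs on n nodes in which every G_t is rooted (i.e., contains a rooted spanning tree: there is a node from which every node is reachable by a directed path in G_t), the dynamic radius of 𝒢 is at most C·n·log log n; that is, some node is a broadcaster in G_1 ∘ ⋯ ∘ G_t for some t ≤ C·n·log log n. -/

import Mathlib

/-!
Fix a window of `2n` rounds and a node `j`. Going backwards through the window, the set of nodes
from which `j` is reachable grows strictly in at most `n - 1` rounds; in every other round it is
closed under predecessors in that round's graph, hence contains its root. So the roots of a
majority of the `2n` rounds reach `j` within the window, and greedily `γ` rounds hit these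
majorities for any `2 ^ γ` nodes. Thus if any `γ` nodes have a common source at time `t`, any
`2 ^ γ` nodes have one at time `t + 2n`, and starting from `γ = 1` all `n` nodes have a common
source, i.e. a broadcaster, after `log log n + O(1)` windows.
-/

/-- `prodUpTo G t` is the product graph `G_1 ∘ G_2 ∘ ⋯ ∘ G_t`, where `G_r` is `G (r-1)`
(0-indexed sequence); the empty product (`t = 0`) has exactly the self-loops. -/
def prodUpTo {n : ℕ} (G : ℕ → Fin n → Fin n → Prop) : ℕ → Fin n → Fin n → Prop
  | 0, i, j => i = j
  | t + 1, i, j => ∃ k, prodUpTo G t i k ∧ G t k j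

open Finset

section Covering

variable {ι α : Type*} [DecidableEq α] (U : Finset α) (A : ι → Finset α)

theorem exists_lt_two_mul_card_filter_mem (hA : ∀ i, A i ⊆ U) (hmaj : ∀ i, #U < 2 * #(A i))
    {I : Finset ι} (hI : I.Nonempty) : ∃ a ∈ U, #I < 2 * #{i ∈ I | a ∈ A i} := by
  by_contra! h
  have double_count : ∑ a ∈ U, #{i ∈ I | a ∈ A i} = ∑ i ∈ I, #(A i) := by
    have := sum_card_bipartiteAbove_eq_sum_card_bipartiteBelow (s := U) (t := I)
      (r := fun a i => a ∈ A i)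
    simpa only [bipartiteAbove, bipartiteBelow, filter_mem_eq_inter, inter_eq_right.2 (hA _)]
      using this
  have hlt : ∑ i ∈ I, #U < ∑ i ∈ I, 2 * #(A i) :=
    sum_lt_sum_of_nonempty hI fun i _ => hmaj i
  have hle : ∑ a ∈ U, 2 * #{i ∈ I | a ∈ A i} ≤ ∑ a ∈ U, #I := sum_le_sum h
  rw [← mul_sum, double_count, mul_sum] at hle
  simp only [sum_const, smul_eq_mul] at hlt hle
  linarith [mul_comm #I #U]

/-- Each greedy point misses fewer than half of the remaining sets, so the largest family that
`m` points are sure to hit satisfies `g (m + 1) = 2 * g m + 2`, i.e. `g m = 2 ^ (m + 1) - 2`. -/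
theorem exists_hitting_set (hA : ∀ i, A i ⊆ U) (hmaj : ∀ i, #U < 2 * #(A i)) (m : ℕ) :
    ∀ I : Finset ι, #I + 2 ≤ 2 ^ (m + 1) →
      ∃ B : Finset α, #B ≤ m ∧ ∀ i ∈ I, ∃ a ∈ B, a ∈ A i := by
  induction m with
  | zero =>
    intro I hI
    rw [card_eq_zero.1 (by simpa using hI : #I = 0)]
    exact ⟨∅, le_rfl, by simp⟩
  | succ m ih =>
    intro I hI
    rcases I.eq_empty_or_nonempty with rfl | hne
    · exact ⟨∅, Nat.zero_le _, by simp⟩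
    obtain ⟨a, -, ha⟩ := exists_lt_two_mul_card_filter_mem U A hA hmaj hne
    have hsplit := card_filter_add_card_filter_not (s := I) (p := fun i => a ∈ A i)
    obtain ⟨B, hB, hhit⟩ := ih {i ∈ I | a ∉ A i} (by rw [pow_succ] at hI; omega)
    refine ⟨insert a B, (card_insert_le a B).trans (by omega), fun i hi => ?_⟩
    by_cases hai : a ∈ A i
    · exact ⟨a, mem_insert_self a B, hai⟩
    · obtain ⟨b, hb, hbi⟩ := hhit i (mem_filter.2 ⟨hi, hai⟩)
      exact ⟨b, mem_insert_of_mem hb, hbi⟩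

end Covering

theorem card_filter_ne_add_card_le {α : Type*} [DecidableEq α] {S : ℕ → Finset α}
    (hS : Antitone S) (N : ℕ) : #{a ∈ range N | S (a + 1) ≠ S a} + #(S N) ≤ #(S 0) := by
  induction N with
  | zero => simp
  | succ N ih =>
    rw [range_add_one, filter_insert]
    split_ifs with h
    · have hlt : #(S (N + 1)) < #(S N) :=
        card_lt_card ((hS N.le_succ).ssubset_of_ne h)
      have := card_insert_le N {a ∈ range N | S (a + 1) ≠ S a}
      omega
    · rw [not_not.1 h]
      exact ih

section Products

variable {n : ℕ}

theorem prodUpTo_self {G : ℕ → Fin n → Fin n → Prop} (hloop : ∀ t i, G t i i) (t : ℕ)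
    (i : Fin n) : prodUpTo G t i i := by
  induction t with
  | zero => rfl
  | succ t ih => exact ⟨i, ih, hloop t i⟩

theorem prodUpTo_cons {H : ℕ → Fin n → Fin n → Prop} {L : ℕ} {k m j : Fin n}
    (hkm : H 0 k m) (hmj : prodUpTo (fun s => H (s + 1)) L m j) : prodUpTo H (L + 1) k j := by
  induction L generalizing j with
  | zero => exact ⟨k, rfl, hmj ▸ hkm⟩
  | succ L ih =>
    obtain ⟨m', hmm', hm'j⟩ := hmj
    exact ⟨m', ih hmm', hm'j⟩

theorem prodUpTo_add {G : ℕ → Fin n → Fin n → Prop} {t L : ℕ} {x k j : Fin n}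
    (hxk : prodUpTo G t x k) (hkj : prodUpTo (fun s => G (t + s)) L k j) :
    prodUpTo G (t + L) x j := by
  induction L generalizing j with
  | zero => exact hkj ▸ hxk
  | succ L ih =>
    obtain ⟨m, hkm, hmj⟩ := hkj
    exact ⟨m, ih hkm, hmj⟩

noncomputable def inSet (G : ℕ → Fin n → Fin n → Prop) (t L : ℕ) (j : Fin n) :
    Finset (Fin n) :=
  open Classical in {k | prodUpTo (fun s => G (t + s)) L k j}

variable {G : ℕ → Fin n → Fin n → Prop}

@[simp]
theorem mem_inSet {t L : ℕ} {j k : Fin n} :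
    k ∈ inSet G t L j ↔ prodUpTo (fun s => G (t + s)) L k j := by
  simp [inSet]

theorem inSet_zero (t : ℕ) (j : Fin n) : inSet G t 0 j = {j} := by
  ext k
  simp [prodUpTo]

theorem mem_inSet_succ_of_mem {t L : ℕ} {j k m : Fin n} (hkm : G t k m)
    (hm : m ∈ inSet G (t + 1) L j) : k ∈ inSet G t (L + 1) j := by
  rw [mem_inSet] at hm ⊢
  refine prodUpTo_cons hkm ?_
  convert hm using 3
  omega

theorem inSet_succ_subset (hloop : ∀ t i, G t i i) (t L : ℕ) (j : Fin n) :
    inSet G (t + 1) L j ⊆ inSet G t (L + 1) j :=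
  fun k hk => mem_inSet_succ_of_mem (hloop t k) hk

theorem mem_inSet_of_inSet_succ_eq (hloop : ∀ t i, G t i i) {t L : ℕ} {j r : Fin n}
    (heq : inSet G t (L + 1) j = inSet G (t + 1) L j) (hr : Relation.ReflTransGen (G t) r j) :
    r ∈ inSet G (t + 1) L j := by
  induction hr using Relation.ReflTransGen.head_induction_on with
  | refl => exact mem_inSet.2 (prodUpTo_self (fun s => hloop _) L j)
  | head huv _ ih => exact heq ▸ mem_inSet_succ_of_mem huv ih

end Products

section Amplification

variable {n : ℕ} {G : ℕ → Fin n → Fin n → Prop}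

theorem le_card_filter_root_mem_inSet (hloop : ∀ t i, G t i i) {root : ℕ → Fin n}
    (hroot : ∀ s v, Relation.ReflTransGen (G s) (root s) v) (t N : ℕ) (j : Fin n) :
    N + 1 ≤ #{a ∈ range N | root (t + a) ∈ inSet G t N j} + n := by
  set S : ℕ → Finset (Fin n) := fun a => inSet G (t + a) (N - a) j with hSdef
  have hS : Antitone S := by
    refine antitone_nat_of_succ_le fun a => ?_
    rcases lt_or_ge a N with ha | ha
    · have hN : N - a = N - (a + 1) + 1 := by omega
      simp only [hSdef, hN]
      exact inSet_succ_subset hloop (t + a) _ j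
    · simp [hSdef, Nat.sub_eq_zero_of_le ha, Nat.sub_eq_zero_of_le (ha.trans a.le_succ),
        inSet_zero]
  have hchain := card_filter_ne_add_card_le hS N
  have hlast : #(S N) = 1 := by simp [hSdef, inSet_zero]
  have hfirst : #(S 0) ≤ n := (card_le_univ _).trans_eq (Fintype.card_fin n)
  have hstable :
      {a ∈ range N | S (a + 1) = S a} ⊆ {a ∈ range N | root (t + a) ∈ inSet G t N j} := by
    intro a ha
    obtain ⟨haN, heq⟩ := mem_filter.1 ha
    have hN : N - a = N - (a + 1) + 1 := by have := mem_range.1 haN; omega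
    simp only [hSdef, hN] at heq
    have hmem : root (t + a) ∈ S (a + 1) :=
      mem_inSet_of_inSet_succ_eq (t := t + a) hloop heq.symm (hroot _ j)
    have hS0 : S 0 = inSet G t N j := by simp [hSdef]
    exact mem_filter.2 ⟨haN, hS0 ▸ hS (Nat.zero_le _) hmem⟩
  have hsplit := card_filter_add_card_filter_not (s := range N) (p := fun a => S (a + 1) = S a)
  have := card_le_card hstable
  simp only [card_range] at hsplit
  simp only [ne_eq] at hchain
  omega

def HasCommonSources (G : ℕ → Fin n → Fin n → Prop) (t γ : ℕ) : Prop :=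
  ∀ K : Finset (Fin n), #K ≤ γ → ∃ x, ∀ k ∈ K, prodUpTo G t x k

theorem HasCommonSources.two_pow (hloop : ∀ t i, G t i i)
    (hroot : ∀ t : ℕ, ∃ r : Fin n, ∀ v : Fin n, Relation.ReflTransGen (G t) r v)
    {t γ : ℕ} (hγ : 1 ≤ γ) (h : HasCommonSources G t γ) :
    HasCommonSources G (t + 2 * n) (2 ^ γ) := by
  choose root hroot using hroot
  intro K hK
  let A : Fin n → Finset ℕ := fun j =>
    {a ∈ range (2 * n) | root (t + a) ∈ inSet G t (2 * n) j}
  have hmaj : ∀ j, #(range (2 * n)) < 2 * #(A j) := fun j => by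
    have := le_card_filter_root_mem_inSet hloop hroot t (2 * n) j
    simp only [card_range, A]
    omega
  have hK2 : #K + 2 ≤ 2 ^ (γ + 1) := by
    have := Nat.one_lt_two_pow_iff.2 (by omega : γ ≠ 0)
    rw [pow_succ]
    omega
  obtain ⟨B, hB, hhit⟩ :=
    exists_hitting_set (range (2 * n)) A (fun j => filter_subset _ _) hmaj γ K hK2
  obtain ⟨x, hx⟩ := h (B.image fun a => root (t + a)) (card_image_le.trans hB)
  refine ⟨x, fun j hj => ?_⟩
  obtain ⟨a, haB, haj⟩ := hhit j hj
  exact prodUpTo_add (hx _ (mem_image_of_mem _ haB)) (mem_inSet.1 (mem_filter.1 haj).2)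

theorem hasCommonSources_two_pow_two_pow (hloop : ∀ t i, G t i i)
    (hroot : ∀ t : ℕ, ∃ r : Fin n, ∀ v : Fin n, Relation.ReflTransGen (G t) r v) (m : ℕ) :
    HasCommonSources G (2 * n * (m + 1)) (2 ^ 2 ^ m) := by
  induction m with
  | zero =>
    have h₀ : HasCommonSources G 0 1 := fun K hK => by
      obtain ⟨r, -⟩ := hroot 0
      rcases K.eq_empty_or_nonempty with rfl | ⟨x, hx⟩
      · exact ⟨r, by simp⟩
      · exact ⟨x, fun k hk => card_le_one.1 hK x hx k hk⟩
    simpa using h₀.two_pow hloop hroot le_rfl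
  | succ m ih =>
    have h := ih.two_pow hloop hroot Nat.one_le_two_pow
    have hγ : 2 ^ 2 ^ (m + 1) ≤ 2 ^ 2 ^ 2 ^ m :=
      Nat.pow_le_pow_right two_pos (Nat.pow_le_pow_right two_pos m.lt_two_pow_self)
    rw [show 2 * n * (m + 1 + 1) = 2 * n * (m + 1) + 2 * n by ring]
    exact fun K hK => h K (hK.trans hγ)

end Amplification

section Estimates

open Real

theorem clog_two_lt (n : ℕ) : (Nat.clog 2 n : ℝ) < 2 * log n + 1 := by
  have hlogn : 0 ≤ log n := log_natCast_nonneg n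
  have hlog2 : 1 / 2 < log 2 := by linarith [log_two_gt_d9]
  rw [← natCeil_logb_natCast, Nat.cast_ofNat]
  calc (⌈logb 2 n⌉₊ : ℝ) < logb 2 n + 1 :=
        Nat.ceil_lt_add_one (div_nonneg hlogn (by linarith))
    _ ≤ 2 * log n + 1 := by
      rw [logb, add_le_add_iff_right, div_le_iff₀ (by linarith)]
      nlinarith

theorem clog_two_clog_two_add_one_le (n : ℕ) (hn : 3 ≤ n) :
    (Nat.clog 2 (Nat.clog 2 n) : ℝ) + 1 ≤ 75 * log (log n) := by
  set c := Nat.clog 2 n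
  have hlogn : 1.0986 < log n :=
    calc (1.0986 : ℝ) < log 3 := by linarith [log_three_gt_d9]
      _ ≤ log n := log_le_log (by norm_num) (by exact_mod_cast hn)
  have hloglog : 1 / 12 ≤ log (log n) := by
    have := one_sub_inv_le_log_of_pos (x := log n) (by linarith)
    have : (log n)⁻¹ < 1 / 1.0986 := by
      rw [inv_eq_one_div]; exact one_div_lt_one_div_of_lt (by norm_num) hlogn
    linarith
  have hc : (c : ℝ) < 3 * log n := by linarith [clog_two_lt n]
  have hc_pos : (0 : ℝ) < c := by
    exact_mod_cast Nat.clog_pos one_lt_two (by omega : 1 < n)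
  have hlogc : log c ≤ 2 + log (log n) := by
    calc log c ≤ log (3 * log n) := log_le_log hc_pos hc.le
      _ = log 3 + log (log n) := log_mul (by norm_num) (by linarith)
      _ ≤ 2 + log (log n) := by linarith [log_three_lt_d9]
  linarith [clog_two_lt c]

end Estimates

/-- There exists a constant `C > 0` such that for every `n ≥ 3` and every sequence of rooted
communication graphs on `n` nodes (each graph has a node from which all nodes are reachable),
some node is a broadcaster in the product of the first `t` graphs for some
`t ≤ C · n · log log n`. -/
theorem rooted_dynamic_radius :
    ∃ C : ℝ, 0 < C ∧
      ∀ n : ℕ, 3 ≤ n →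
        ∀ G : ℕ → Fin n → Fin n → Prop,
          (∀ t i, G t i i) →
          (∀ t : ℕ, ∃ r : Fin n, ∀ v : Fin n, Relation.ReflTransGen (G t) r v) →
          ∃ (i : Fin n) (t : ℕ), (t : ℝ) ≤ C * n * Real.log (Real.log n) ∧
            ∀ j : Fin n, prodUpTo G t i j := by
  refine ⟨150, by norm_num, fun n hn G hloop hroot => ?_⟩
  set m := Nat.clog 2 (Nat.clog 2 n)
  have hn_le : n ≤ 2 ^ 2 ^ m :=
    (Nat.le_pow_clog one_lt_two n).trans
      (Nat.pow_le_pow_right two_pos (Nat.le_pow_clog one_lt_two _))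
  obtain ⟨x, hx⟩ := hasCommonSources_two_pow_two_pow hloop hroot m univ
    (by rwa [card_univ, Fintype.card_fin])
  refine ⟨x, 2 * n * (m + 1), ?_, fun j => hx j (mem_univ j)⟩
  have hm := clog_two_clog_two_add_one_le n hn
  push_cast
  nlinarith [(Nat.cast_nonneg n : (0 : ℝ) ≤ n)]
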